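/- arXiv:2101.10742 — 2 statements merged into one kernel-verified Lean document; each statement's English description precedes it below -/
import Mathlib

section
/- Let G be a directed graph whose vertex set is partitioned into sets V₁,…,V_k (pairwise disjoint). Suppose every edge of G leaving V_i enters a set B_i, every edge entering V_i comes from B_{i-1}, the sets B_0,…,B_k are pairwise disjoint from all V_j, all out-neighbors of B_i lie in V_{i+1} (for i < k), B_0 has no in-edges from any vertex, and B_k has no out-edges. Then any directed path that starts and ends in V_i is entirely contained in V_i. -/
/-- Abstract level structure: vertex classes V₁,…,V_k (here `Vt i` for `i : Fin k`)
and buffer classes B₀,…,B_k (here `B j` for `j : Fin (k+1)`), where edges leaving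
`Vt i` enter `B i.succ`, edges entering `Vt i` come from `B i.castSucc`,
out-neighbors of `B i.castSucc` lie in `Vt i`, B₀ has no in-edges and B_k has no
out-edges. Then any directed path starting and ending in `Vt i` stays in `Vt i`. -/
theorem stmt12 {V : Type*} (E : V → V → Prop) (k : ℕ)
    (Vt : Fin k → Set V) (B : Fin (k + 1) → Set V)
    (hVdisj : ∀ i j, i ≠ j → Disjoint (Vt i) (Vt j))
    (hBVdisj : ∀ i j, Disjoint (B i) (Vt j))
    (hleave : ∀ i : Fin k, ∀ u v, E u v → u ∈ Vt i → v ∉ Vt i → v ∈ B i.succ)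
    (henter : ∀ i : Fin k, ∀ u v, E u v → v ∈ Vt i → u ∉ Vt i → u ∈ B i.castSucc)
    (houtB : ∀ i : Fin k, ∀ u v, E u v → u ∈ B i.castSucc → v ∈ Vt i)
    (hB0 : ∀ u v, E u v → v ∉ B 0)
    (hBk : ∀ u v, E u v → u ∉ B (Fin.last k))
    (i : Fin k) (P : List V) (hP : P.Chain' E) (a b : V)
    (hh : P.head? = some a) (ha : a ∈ Vt i)
    (hl : P.getLast? = some b) (hb : b ∈ Vt i) :
    ∀ v ∈ P, v ∈ Vt i := by
  -- predicate: vertex is "strictly above level i"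
  set Hi : V → Prop := fun x =>
    (∃ j : Fin k, i < j ∧ x ∈ Vt j) ∨ (∃ m : Fin (k+1), (i : ℕ) < (m : ℕ) ∧ x ∈ B m)
    with hHi
  -- step lemma
  have step : ∀ x y, E x y → Hi x → Hi y := by
    intro x y hxy hx
    rcases hx with ⟨j, hij, hxj⟩ | ⟨m, him, hxm⟩
    · by_cases hy : y ∈ Vt j
      · exact Or.inl ⟨j, hij, hy⟩
      · refine Or.inr ⟨j.succ, ?_, hleave j x y hxy hxj hy⟩
        simp [Fin.val_succ]
        omega
    · by_cases hm : m = Fin.last k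
      · exact absurd hxm (by rw [hm] at *; exact hBk x y hxy)
      · have hmk : (m : ℕ) < k := by
          rcases Fin.lt_last_iff_ne_last.mpr hm with h
          simpa [Fin.lt_def] using h
        set j : Fin k := ⟨m, hmk⟩ with hj
        have hmc : m = j.castSucc := by ext; simp [hj]
        refine Or.inl ⟨j, ?_, houtB j x y hxy (hmc ▸ hxm)⟩
        simpa [Fin.lt_def, hj] using him
  -- chain invariance
  have inv : ∀ (Q : List V), Q.Chain' E → ∀ x, Q.head? = some x → Hi x →
      ∀ v ∈ Q, Hi v := by
    intro Q
    induction Q with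
    | nil => intro _ x hx; simp at hx
    | cons y rest ih =>
      intro hc x hx hHx v hv
      have heq : y = x := by simpa using hx
      rcases List.mem_cons.mp hv with rfl | hv'
      · exact heq ▸ hHx
      · cases rest with
        | nil => simp at hv'
        | cons z rest' =>
          have hE : E y z := (List.isChain_cons_cons.mp hc).1
          have hHx' : Hi y := heq ▸ hHx
          exact ih (List.isChain_cons_cons.mp hc).2 z rfl (step _ _ hE hHx') v hv'
  -- Hi contradicts being in Vt i
  have hnot : ∀ v, Hi v → v ∉ Vt i := by
    intro v hv hvi
    rcases hv with ⟨j, hij, hvj⟩ | ⟨m, _, hvm⟩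
    · exact (hVdisj i j (Fin.ne_of_lt hij)).ne_of_mem hvi hvj rfl
    · exact (hBVdisj m i).ne_of_mem hvm hvi rfl
  -- main induction
  revert hP hh hl ha
  induction P generalizing a with
  | nil => intro _ hh; simp at hh
  | cons x rest ih =>
    intro hP hh ha hl v hv
    have heq : x = a := by simpa using hh
    rcases List.mem_cons.mp hv with rfl | hv'
    · exact heq ▸ ha
    · have hax : x ∈ Vt i := heq ▸ ha
      cases rest with
      | nil => simp at hv'
      | cons y rest' =>
        have hE : E x y := (List.isChain_cons_cons.mp hP).1
        have hc' := (List.isChain_cons_cons.mp hP).2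
        have hl' : (y :: rest').getLast? = some b := by
          rw [← hl]; simp [List.getLast?_cons_cons]
        by_cases hy : y ∈ Vt i
        · exact ih y hc' rfl hy hl' v hv'
        · have hHy : Hi y := Or.inr ⟨i.succ, by simp [Fin.val_succ], hleave i _ y hE hax hy⟩
          have := inv (y :: rest') hc' y rfl hHy b (List.mem_of_getLast? hl')
          exact absurd hb (hnot b this)
end

section
/- Let P be a directed path in the N×N grid graph from (x,1) to (x',N) (bottom to top) and Q a directed path from (1,y) to (N,y') (left to right). Then P and Q share a common vertex (μ,δ), and moreover they traverse this vertex in the sense that either they share the vertex or, if the grid vertex (μ,δ) is replaced by the split pair (μ,δ)_LB → (μ,δ)_TR, both P and Q must use the edge (μ,δ)_LB → (μ,δ)_TR. -/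
def GridAdj (N : ℕ) (u v : ℕ × ℕ) : Prop :=
  1 ≤ u.1 ∧ 1 ≤ u.2 ∧ u.1 ≤ N ∧ u.2 ≤ N ∧
    ((v.1 = u.1 + 1 ∧ v.2 = u.2 ∧ u.1 < N) ∨ (v.1 = u.1 ∧ v.2 = u.2 + 1 ∧ u.2 < N))

/-- The N×N grid with every vertex w split into w_LB = (w, false) and
w_TR = (w, true): the split edge goes (w,false) → (w,true), in-edges of w enter
(w,false) and out-edges leave (w,true). -/
def SplitGridAdjAll (N : ℕ) : (ℕ × ℕ) × Bool → (ℕ × ℕ) × Bool → Prop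
  | (u, bu), (v, bv) =>
    (u = v ∧ bu = false ∧ bv = true ∧ 1 ≤ u.1 ∧ 1 ≤ u.2 ∧ u.1 ≤ N ∧ u.2 ≤ N) ∨
    (GridAdj N u v ∧ bu = true ∧ bv = false)

private lemma splitAdj_iff (N : ℕ) (a b : (ℕ × ℕ) × Bool) :
    SplitGridAdjAll N a b ↔
      (a.1 = b.1 ∧ a.2 = false ∧ b.2 = true ∧ 1 ≤ a.1.1 ∧ 1 ≤ a.1.2 ∧ a.1.1 ≤ N ∧ a.1.2 ≤ N) ∨
      (GridAdj N a.1 b.1 ∧ a.2 = true ∧ b.2 = false) := by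
  rcases a with ⟨u, bu⟩; rcases b with ⟨v, bv⟩; rfl

private lemma monoIdx (g : ℕ → ℕ) (n : ℕ) (hc : ∀ i, i + 1 < n → g i ≤ g (i + 1)) :
    ∀ q, q < n → ∀ p, p ≤ q → g p ≤ g q := by
  intro q
  induction q with
  | zero => intro _ p hp; have hp0 : p = 0 := Nat.le_zero.mp hp; rw [hp0]
  | succ k ih =>
    intro hq p hp
    rcases Nat.lt_or_ge p (k + 1) with h | h
    · exact le_trans (ih (by omega) p (by omega)) (hc k hq)
    · have hp0 : p = k + 1 := by omega
      rw [hp0]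

private lemma ivtIdx (g : ℕ → ℕ) (n : ℕ) (hc : ∀ i, i + 1 < n → g (i + 1) ≤ g i + 1) :
    ∀ q, q < n → ∀ p, p ≤ q → ∀ c, g p ≤ c → c ≤ g q →
      ∃ r, p ≤ r ∧ r ≤ q ∧ g r = c := by
  intro q
  induction q with
  | zero =>
    intro _ p hp c h1 h2
    have hp0 : p = 0 := by omega
    subst hp0
    exact ⟨0, le_rfl, le_rfl, by omega⟩
  | succ k ih =>
    intro hq p hp c h1 h2
    by_cases hpk : p = k + 1
    · subst hpk
      exact ⟨k + 1, le_rfl, le_rfl, by omega⟩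
    · have hp' : p ≤ k := by omega
      rcases le_or_gt c (g k) with h | h
      · obtain ⟨r, hr1, hr2, hr3⟩ := ih (by omega) p hp' c h1 h
        exact ⟨r, hr1, by omega, hr3⟩
      · have := hc k hq
        exact ⟨k + 1, by omega, le_rfl, by omega⟩

private lemma flipNat (p : ℕ → Prop) :
    ∀ b a, a ≤ b → p a → ¬ p b → ∃ j, a ≤ j ∧ j < b ∧ p j ∧ ¬ p (j + 1) := by
  classical
  intro b
  induction b with
  | zero =>
    intro a ha hpa hpb
    have : a = 0 := by omega
    subst this; exact absurd hpa hpb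
  | succ k ih =>
    intro a ha hpa hpb
    by_cases hak : a = k + 1
    · subst hak; exact absurd hpa hpb
    · have ha' : a ≤ k := by omega
      by_cases hk : p k
      · exact ⟨k, ha', by omega, hk, hpb⟩
      · obtain ⟨j, hj1, hj2, hj3, hj4⟩ := ih a ha' hpa hk
        exact ⟨j, hj1, by omega, hj3, hj4⟩

private lemma gridCross (N n m : ℕ) (u v : ℕ → ℕ × ℕ)
    (hn : 0 < n) (hm : 0 < m)
    (hu : ∀ i, i + 1 < n → u (i + 1) = u i ∨ GridAdj N (u i) (u (i + 1)))
    (hv : ∀ i, i + 1 < m → v (i + 1) = v i ∨ GridAdj N (v i) (v (i + 1)))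
    (hub : ∀ i, i < n → 1 ≤ (u i).1 ∧ (u i).1 ≤ N ∧ 1 ≤ (u i).2 ∧ (u i).2 ≤ N)
    (hvb : ∀ i, i < m → 1 ≤ (v i).1 ∧ (v i).1 ≤ N ∧ 1 ≤ (v i).2 ∧ (v i).2 ≤ N)
    (hu0 : (u 0).2 = 1) (hun : (u (n - 1)).2 = N)
    (hv0 : (v 0).1 = 1) (hvm : (v (m - 1)).1 = N) :
    ∃ r s, r < n ∧ s < m ∧ u r = v s := by
  classical
  by_contra hcon
  push_neg at hcon
  have hN : 1 ≤ N := le_trans (hub 0 hn).2.2.1 (hub 0 hn).2.2.2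
  -- step facts
  have husnd : ∀ i, i + 1 < n → (u i).2 ≤ (u (i + 1)).2 ∧ (u (i + 1)).2 ≤ (u i).2 + 1 := by
    intro i hi
    rcases hu i hi with h | h
    · rw [h]; omega
    · rcases h with ⟨-, -, -, -, h5⟩; omega
  have hufst : ∀ i, i + 1 < n → (u i).1 ≤ (u (i + 1)).1 := by
    intro i hi
    rcases hu i hi with h | h
    · rw [h]
    · rcases h with ⟨-, -, -, -, h5⟩; omega
  have hvsnd : ∀ i, i + 1 < m → (v i).2 ≤ (v (i + 1)).2 := by
    intro i hi
    rcases hv i hi with h | h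
    · rw [h]
    · rcases h with ⟨-, -, -, -, h5⟩; omega
  have hvfst : ∀ i, i + 1 < m → (v i).1 ≤ (v (i + 1)).1 ∧ (v (i + 1)).1 ≤ (v i).1 + 1 := by
    intro i hi
    rcases hv i hi with h | h
    · rw [h]; omega
    · rcases h with ⟨-, -, -, -, h5⟩; omega
  have umono2 : ∀ q, q < n → ∀ p, p ≤ q → (u p).2 ≤ (u q).2 :=
    monoIdx (fun i => (u i).2) n (fun i hi => (husnd i hi).1)
  have umono1 : ∀ q, q < n → ∀ p, p ≤ q → (u p).1 ≤ (u q).1 :=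
    monoIdx (fun i => (u i).1) n hufst
  have vmono2 : ∀ q, q < m → ∀ p, p ≤ q → (v p).2 ≤ (v q).2 :=
    monoIdx (fun i => (v i).2) m hvsnd
  have vmono1 : ∀ q, q < m → ∀ p, p ≤ q → (v p).1 ≤ (v q).1 :=
    monoIdx (fun i => (v i).1) m (fun i hi => (hvfst i hi).1)
  -- every row is visited by u, every column by v
  have hrow : ∀ j, 1 ≤ j → j ≤ N → ∃ r, r < n ∧ (u r).2 = j := by
    intro j h1 h2
    obtain ⟨r, _, hr2, hr3⟩ :=
      ivtIdx (fun i => (u i).2) n (fun i hi => (husnd i hi).2) (n - 1) (by omega) 0 (by omega)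
        j (by show (u 0).2 ≤ j; omega) (by show j ≤ (u (n - 1)).2; omega)
    exact ⟨r, by omega, hr3⟩
  have hcol : ∀ i, 1 ≤ i → i ≤ N → ∃ s, s < m ∧ (v s).1 = i := by
    intro i h1 h2
    obtain ⟨s, _, hs2, hs3⟩ :=
      ivtIdx (fun k => (v k).1) m (fun k hk => (hvfst k hk).2) (m - 1) (by omega) 0 (by omega)
        i (by show (v 0).1 ≤ i; omega) (by show i ≤ (v (m - 1)).1; omega)
    exact ⟨s, by omega, hs3⟩
  choose! rp hrp1 hrp2 using hrow
  choose! cp hcp1 hcp2 using hcol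
  have hRb : ∀ j, 1 ≤ j → j ≤ N → 1 ≤ (u (rp j)).1 ∧ (u (rp j)).1 ≤ N := by
    intro j h1 h2
    exact ⟨(hub _ (hrp1 j h1 h2)).1, (hub _ (hrp1 j h1 h2)).2.1⟩
  have hCb : ∀ i, 1 ≤ i → i ≤ N → 1 ≤ (v (cp i)).2 ∧ (v (cp i)).2 ≤ N := by
    intro i h1 h2
    exact ⟨(hvb _ (hcp1 i h1 h2)).2.2.1, (hvb _ (hcp1 i h1 h2)).2.2.2⟩
  -- C is monotone
  have hCmono : ∀ i i', 1 ≤ i → i ≤ i' → i' ≤ N → (v (cp i)).2 ≤ (v (cp i')).2 := by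
    intro i i' h1 h2 h3
    rcases eq_or_lt_of_le h2 with rfl | hlt
    · exact le_rfl
    · have hpi : cp i ≤ cp i' := by
        by_contra hc
        push_neg at hc
        have := vmono1 (cp i) (hcp1 i h1 (by omega)) (cp i') (le_of_lt hc)
        rw [hcp2 i h1 (by omega), hcp2 i' (by omega) h3] at this
        omega
      exact vmono2 (cp i') (hcp1 i' (by omega) h3) (cp i) hpi
  -- if C (R j) = j we would have a common point
  have key : ∀ j, 1 ≤ j → j ≤ N → (v (cp ((u (rp j)).1))).2 ≠ j := by
    intro j h1 h2 heq
    have hRj := hRb j h1 h2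
    apply hcon (rp j) (cp ((u (rp j)).1)) (hrp1 j h1 h2) (hcp1 _ hRj.1 hRj.2)
    have e1 : u (rp j) = ((u (rp j)).1, j) := Prod.ext rfl (hrp2 j h1 h2)
    have e2 : v (cp ((u (rp j)).1)) = ((u (rp j)).1, j) :=
      Prod.ext (hcp2 ((u (rp j)).1) hRj.1 hRj.2) heq
    rw [e1, e2]
  have g1 : 1 < (v (cp ((u (rp 1)).1))).2 := by
    have hb := hRb 1 le_rfl hN
    have hc1 := (hCb ((u (rp 1)).1) hb.1 hb.2).1
    have := key 1 le_rfl hN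
    omega
  have gN : ¬ (N < (v (cp ((u (rp N)).1))).2) := by
    have hb := hRb N hN le_rfl
    have := (hCb ((u (rp N)).1) hb.1 hb.2).2
    omega
  obtain ⟨j, hj1, hj2, hgj, hgj1⟩ :=
    flipNat (fun j => j < (v (cp ((u (rp j)).1))).2) N 1 hN g1 gN
  simp only [not_lt] at hgj1
  have hj1N : 1 ≤ j + 1 := by omega
  have hjN : j + 1 ≤ N := by omega
  have hkey := key (j + 1) hj1N hjN
  -- R j ≤ R (j+1)
  have hRle : (u (rp j)).1 ≤ (u (rp (j + 1))).1 := by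
    have hpj : rp j ≤ rp (j + 1) := by
      by_contra hc
      push_neg at hc
      have := umono2 (rp j) (hrp1 j (by omega) (by omega)) (rp (j + 1)) (le_of_lt hc)
      rw [hrp2 j (by omega) (by omega), hrp2 (j + 1) hj1N hjN] at this
      omega
    exact umono1 (rp (j + 1)) (hrp1 (j + 1) hj1N hjN) (rp j) hpj
  have hbj := hRb j (by omega) (by omega)
  have hbj1 := hRb (j + 1) hj1N hjN
  have := hCmono ((u (rp j)).1) ((u (rp (j + 1))).1) hbj.1 hRle hbj1.2
  omega

private lemma traverse (N : ℕ) (P : List ((ℕ × ℕ) × Bool)) (a b : ℕ × ℕ)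
    (hP : P.Chain' (SplitGridAdjAll N))
    (hPh : P.head? = some (a, false)) (hPl : P.getLast? = some (b, true))
    (w : ℕ × ℕ) (r : ℕ) (hr : r < P.length) (hw : (P.getD r ((0, 0), false)).1 = w) :
    (w, false) ∈ P ∧ (w, true) ∈ P ∧ ((w, false), (w, true)) ∈ P.zip P.tail := by
  classical
  have hn0 : 0 < P.length := by omega
  have hpuE : ∀ i (_hi : i < P.length), P.getD i ((0, 0), false) = P[i]'(by omega) :=
    fun i hi => List.getD_eq_getElem P _ hi
  have hPstep : ∀ i, i + 1 < P.length →
      SplitGridAdjAll N (P.getD i ((0, 0), false)) (P.getD (i + 1) ((0, 0), false)) := by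
    intro i hi
    have := List.isChain_iff_getElem.mp hP i (by omega)
    rw [hpuE i (by omega), hpuE (i + 1) (by omega)]
    simpa [List.get_eq_getElem] using this
  have hpu0 : P.getD 0 ((0, 0), false) = (a, false) := by
    rw [hpuE 0 hn0]
    exact Option.some.inj
      ((List.getElem?_eq_getElem hn0).symm.trans ((List.head?_eq_getElem? (l := P)).symm.trans hPh))
  have hpul : P.getD (P.length - 1) ((0, 0), false) = (b, true) := by
    rw [hpuE (P.length - 1) (by omega)]
    exact Option.some.inj
      ((List.getElem?_eq_getElem (by omega)).symm.trans
        ((List.getLast?_eq_getElem? (l := P)).symm.trans hPl))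
  have hlen2 : 2 ≤ P.length := by
    rcases Nat.lt_or_ge P.length 2 with h | h
    · have e := hpul
      rw [show P.length - 1 = 0 by omega, hpu0] at e
      simp at e
    · exact h
  have hkey : ∃ k, k + 1 < P.length ∧ P.getD k ((0, 0), false) = (w, false) ∧
      P.getD (k + 1) ((0, 0), false) = (w, true) := by
    cases hb2 : (P.getD r ((0, 0), false)).2 with
    | false =>
      have hrl : r ≠ P.length - 1 := by
        intro h; rw [h, hpul] at hb2; simp at hb2
      refine ⟨r, by omega, Prod.ext hw hb2, ?_⟩
      have hs := hPstep r (by omega)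
      rcases (splitAdj_iff N _ _).mp hs with ⟨h1, _, h3, _⟩ | ⟨_, h2, _⟩
      · exact Prod.ext (by rw [← h1, hw]) h3
      · rw [hb2] at h2; exact absurd h2 (by simp)
    | true =>
      have hr0 : r ≠ 0 := by
        intro h; rw [h, hpu0] at hb2; simp at hb2
      have hs := hPstep (r - 1) (by omega)
      have hre : r - 1 + 1 = r := by omega
      rcases (splitAdj_iff N _ _).mp hs with ⟨h1, h2, _, _⟩ | ⟨_, _, h3⟩
      · refine ⟨r - 1, by omega, ?_, ?_⟩
        · exact Prod.ext (by rw [h1, hre, hw]) h2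
        · rw [hre]; exact Prod.ext hw hb2
      · rw [hre, hb2] at h3; exact absurd h3 (by simp)
  obtain ⟨k, hk, hk0, hk1⟩ := hkey
  have e0 : P[k]'(by omega) = (w, false) := by rw [← hpuE k (by omega)]; exact hk0
  have e1 : P[k + 1]'(by omega) = (w, true) := by rw [← hpuE (k + 1) (by omega)]; exact hk1
  refine ⟨?_, ?_, ?_⟩
  · rw [← e0]; exact List.getElem_mem _
  · rw [← e1]; exact List.getElem_mem _
  · have hzl : k < (P.zip P.tail).length := by
      rw [List.length_zip, List.length_tail]; omega
    have hz : (P.zip P.tail)[k]'hzl = ((w, false), (w, true)) := by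
      rw [List.getElem_zip, List.getElem_tail, e0, e1]
    rw [← hz]; exact List.getElem_mem _

/-- A bottom-to-top path P and a left-to-right path Q in the fully split N×N grid
share a common vertex (μ,δ): both P and Q contain both halves of its split pair
and must use the split edge (μ,δ)_LB → (μ,δ)_TR. -/
theorem stmt13 (N x x' y y' : ℕ) (P Q : List ((ℕ × ℕ) × Bool))
    (hP : P.Chain' (SplitGridAdjAll N)) (hQ : Q.Chain' (SplitGridAdjAll N))
    (hPh : P.head? = some ((x, 1), false)) (hPl : P.getLast? = some ((x', N), true))
    (hQh : Q.head? = some ((1, y), false)) (hQl : Q.getLast? = some ((N, y'), true)) :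
    ∃ μ δ : ℕ,
      ((μ, δ), false) ∈ P ∧ ((μ, δ), true) ∈ P ∧
      ((μ, δ), false) ∈ Q ∧ ((μ, δ), true) ∈ Q ∧
      ((((μ, δ), false), ((μ, δ), true)) ∈ P.zip P.tail) ∧
      ((((μ, δ), false), ((μ, δ), true)) ∈ Q.zip Q.tail) := by
  classical
  have hPne : P ≠ [] := by intro h; rw [h] at hPh; simp at hPh
  have hQne : Q ≠ [] := by intro h; rw [h] at hQh; simp at hQh
  have hn0 : 0 < P.length := List.length_pos_iff.mpr hPne
  have hm0 : 0 < Q.length := List.length_pos_iff.mpr hQne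
  set pu : ℕ → (ℕ × ℕ) × Bool := fun i => P.getD i ((0, 0), false) with hpu
  set qu : ℕ → (ℕ × ℕ) × Bool := fun i => Q.getD i ((0, 0), false) with hqu
  have hpuE : ∀ i (_hi : i < P.length), pu i = P[i]'(by omega) :=
    fun i hi => List.getD_eq_getElem P _ hi
  have hquE : ∀ i (_hi : i < Q.length), qu i = Q[i]'(by omega) :=
    fun i hi => List.getD_eq_getElem Q _ hi
  have hPstep : ∀ i, i + 1 < P.length → SplitGridAdjAll N (pu i) (pu (i + 1)) := by
    intro i hi
    have := List.isChain_iff_getElem.mp hP i (by omega)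
    rw [hpuE i (by omega), hpuE (i + 1) (by omega)]
    simpa [List.get_eq_getElem] using this
  have hQstep : ∀ i, i + 1 < Q.length → SplitGridAdjAll N (qu i) (qu (i + 1)) := by
    intro i hi
    have := List.isChain_iff_getElem.mp hQ i (by omega)
    rw [hquE i (by omega), hquE (i + 1) (by omega)]
    simpa [List.get_eq_getElem] using this
  have hpu0 : pu 0 = ((x, 1), false) := by
    rw [hpuE 0 hn0]
    exact Option.some.inj
      ((List.getElem?_eq_getElem hn0).symm.trans ((List.head?_eq_getElem? (l := P)).symm.trans hPh))
  have hpul : pu (P.length - 1) = ((x', N), true) := by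
    rw [hpuE (P.length - 1) (by omega)]
    exact Option.some.inj
      ((List.getElem?_eq_getElem (by omega)).symm.trans
        ((List.getLast?_eq_getElem? (l := P)).symm.trans hPl))
  have hqu0 : qu 0 = ((1, y), false) := by
    rw [hquE 0 hm0]
    exact Option.some.inj
      ((List.getElem?_eq_getElem hm0).symm.trans ((List.head?_eq_getElem? (l := Q)).symm.trans hQh))
  have hqul : qu (Q.length - 1) = ((N, y'), true) := by
    rw [hquE (Q.length - 1) (by omega)]
    exact Option.some.inj
      ((List.getElem?_eq_getElem (by omega)).symm.trans
        ((List.getLast?_eq_getElem? (l := Q)).symm.trans hQl))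
  have hPlen2 : 2 ≤ P.length := by
    rcases Nat.lt_or_ge P.length 2 with h | h
    · have e := hpul
      rw [show P.length - 1 = 0 by omega, hpu0] at e
      simp at e
    · exact h
  have hQlen2 : 2 ≤ Q.length := by
    rcases Nat.lt_or_ge Q.length 2 with h | h
    · have e := hqul
      rw [show Q.length - 1 = 0 by omega, hqu0] at e
      simp at e
    · exact h
  -- bounds
  have hPb : ∀ i, i < P.length →
      1 ≤ (pu i).1.1 ∧ (pu i).1.1 ≤ N ∧ 1 ≤ (pu i).1.2 ∧ (pu i).1.2 ≤ N := by
    intro i hi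
    rcases Nat.lt_or_ge (i + 1) P.length with h | h
    · rcases (splitAdj_iff N _ _).mp (hPstep i h) with ⟨_, _, _, h4, h5, h6, h7⟩ | ⟨hg, _, _⟩
      · exact ⟨h4, h6, h5, h7⟩
      · exact ⟨hg.1, hg.2.2.1, hg.2.1, hg.2.2.2.1⟩
    · have hi' : P.length - 2 + 1 = i := by omega
      rcases (splitAdj_iff N _ _).mp (hPstep (P.length - 2) (by omega)) with
        ⟨h1, _, _, h4, h5, h6, h7⟩ | ⟨_, _, hb⟩
      · rw [hi'] at h1; rw [← h1]; exact ⟨h4, h6, h5, h7⟩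
      · rw [hi', show i = P.length - 1 by omega, hpul] at hb; simp at hb
  have hQb : ∀ i, i < Q.length →
      1 ≤ (qu i).1.1 ∧ (qu i).1.1 ≤ N ∧ 1 ≤ (qu i).1.2 ∧ (qu i).1.2 ≤ N := by
    intro i hi
    rcases Nat.lt_or_ge (i + 1) Q.length with h | h
    · rcases (splitAdj_iff N _ _).mp (hQstep i h) with ⟨_, _, _, h4, h5, h6, h7⟩ | ⟨hg, _, _⟩
      · exact ⟨h4, h6, h5, h7⟩
      · exact ⟨hg.1, hg.2.2.1, hg.2.1, hg.2.2.2.1⟩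
    · have hi' : Q.length - 2 + 1 = i := by omega
      rcases (splitAdj_iff N _ _).mp (hQstep (Q.length - 2) (by omega)) with
        ⟨h1, _, _, h4, h5, h6, h7⟩ | ⟨_, _, hb⟩
      · rw [hi'] at h1; rw [← h1]; exact ⟨h4, h6, h5, h7⟩
      · rw [hi', show i = Q.length - 1 by omega, hqul] at hb; simp at hb
  -- projected step relations
  have hu : ∀ i, i + 1 < P.length →
      (pu (i + 1)).1 = (pu i).1 ∨ GridAdj N (pu i).1 (pu (i + 1)).1 := by
    intro i hi
    rcases (splitAdj_iff N _ _).mp (hPstep i hi) with ⟨h1, _⟩ | ⟨hg, _⟩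
    · exact Or.inl h1.symm
    · exact Or.inr hg
  have hv : ∀ i, i + 1 < Q.length →
      (qu (i + 1)).1 = (qu i).1 ∨ GridAdj N (qu i).1 (qu (i + 1)).1 := by
    intro i hi
    rcases (splitAdj_iff N _ _).mp (hQstep i hi) with ⟨h1, _⟩ | ⟨hg, _⟩
    · exact Or.inl h1.symm
    · exact Or.inr hg
  obtain ⟨r, s, hr, hs, hrs⟩ :=
    gridCross N P.length Q.length (fun i => (pu i).1) (fun i => (qu i).1) hn0 hm0 hu hv hPb hQb
      (by show (pu 0).1.2 = 1; rw [hpu0]) (by show (pu (P.length - 1)).1.2 = N; rw [hpul])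
      (by show (qu 0).1.1 = 1; rw [hqu0]) (by show (qu (Q.length - 1)).1.1 = N; rw [hqul])
  rcases e : (pu r).1 with ⟨μ, δ⟩
  have hrs' : (qu s).1 = (μ, δ) := by
    have : (pu r).1 = (qu s).1 := hrs
    rw [← this, e]
  obtain ⟨hP1, hP2, hP3⟩ := traverse N P (x, 1) (x', N) hP hPh hPl (μ, δ) r hr e
  obtain ⟨hQ1, hQ2, hQ3⟩ := traverse N Q (1, y) (N, y') hQ hQh hQl (μ, δ) s hs hrs'
  exact ⟨μ, δ, hP1, hP2, hQ1, hQ2, hP3, hQ3⟩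
end
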